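/- Let G_0, G_1, G_2, … be a sequence of graphs with G_i = G_{i−1} ∪ w_i (adding an isolated vertex) for odd i ≥ 1 and G_i = G_{i−1} ∨ w_i (adding a vertex adjacent to all existing vertices) for even i ≥ 2. Set a = |det(A(G_0))|, b = |det(W(G_0))| and p = |det(A(Ḡ_1))|, where Ḡ_1 is the complement of G_1. Then for every i ≥ 1, |det(W(G_i))| = a^{⌈i/2⌉} · b · p^{⌊i/2⌋}. -/

import Mathlib

open Matrix

open scoped Classical in
/-- The 0/1 adjacency matrix of a simple graph, over the integers. -/
noncomputable def adjMat {V : Type*} [Fintype V] (G : SimpleGraph V) : Matrix V V ℤ :=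
  Matrix.of fun u v => if G.Adj u v then (1 : ℤ) else 0

/-- The walk matrix of a simple graph on `Fin n`: its `j`-th column is ``A^j e``
where `e` is the all-ones vector. -/
noncomputable def walkMat {n : ℕ} (G : SimpleGraph (Fin n)) : Matrix (Fin n) (Fin n) ℤ :=
  Matrix.of fun i j => ((adjMat G ^ (j : ℕ)) *ᵥ fun _ => (1 : ℤ)) i

/-- `G ∪ w`: adjoin a new vertex (labelled `0`) adjacent to no vertex of `G`;
the original vertex `i` of `G` becomes `i.succ`. -/
def unionVertex {n : ℕ} (G : SimpleGraph (Fin n)) : SimpleGraph (Fin (n + 1)) where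
  Adj u v := ∃ i j : Fin n, u = i.succ ∧ v = j.succ ∧ G.Adj i j
  symm := by
    constructor
    rintro u v ⟨i, j, hu, hv, h⟩
    exact ⟨j, i, hv, hu, h.symm⟩
  loopless := by
    constructor
    rintro u ⟨i, j, rfl, hv, h⟩
    obtain rfl : i = j := Fin.succ_inj.mp hv
    exact G.irrefl h

/-- `G ∨ w`: adjoin a new vertex (labelled `0`) adjacent to every vertex of `G`;
the original vertex `i` of `G` becomes `i.succ`. -/
def joinVertex {n : ℕ} (G : SimpleGraph (Fin n)) : SimpleGraph (Fin (n + 1)) where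
  Adj u v := (u = 0 ∧ v ≠ 0) ∨ (v = 0 ∧ u ≠ 0) ∨
    ∃ i j : Fin n, u = i.succ ∧ v = j.succ ∧ G.Adj i j
  symm := by
    constructor
    rintro u v (⟨h1, h2⟩ | ⟨h1, h2⟩ | ⟨i, j, hu, hv, h⟩)
    · exact Or.inr (Or.inl ⟨h1, h2⟩)
    · exact Or.inl ⟨h1, h2⟩
    · exact Or.inr (Or.inr ⟨j, i, hv, hu, h.symm⟩)
  loopless := by
    constructor
    rintro u (⟨h1, h2⟩ | ⟨h1, h2⟩ | ⟨i, j, rfl, hv, h⟩)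
    · exact h2 h1
    · exact h2 h1
    · obtain rfl : i = j := Fin.succ_inj.mp hv
      exact G.irrefl h

/-- The sequence `G₀, G₁, G₂, …` where `Gᵢ = G_{i-1} ∪ wᵢ` for odd `i` and
`Gᵢ = G_{i-1} ∨ wᵢ` for even `i ≥ 2`. -/
def seqGraph {n0 : ℕ} (G0 : SimpleGraph (Fin n0)) : (i : ℕ) → SimpleGraph (Fin (n0 + i))
  | 0 => G0
  | (i + 1) => if (i + 1) % 2 = 1 then unionVertex (seqGraph G0 i) else joinVertex (seqGraph G0 i)

/-- A graph is determined by its generalized spectrum. -/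
def IsDGS {n : ℕ} (G : SimpleGraph (Fin n)) : Prop :=
  ∀ H : SimpleGraph (Fin n),
    (adjMat H).charpoly = (adjMat G).charpoly →
    (adjMat Hᶜ).charpoly = (adjMat Gᶜ).charpoly →
    Nonempty (H ≃g G)

/-! Adjoining an isolated vertex `w` to `G` turns the row of `w` in the walk matrix into a unit
vector, and the remaining block is `A(G) W(G)`; hence `det W(G ∪ w) = det A(G) · det W(G)`.
Since `A(Ḡ) = J - I - A(G)`, the column `A(Ḡ)^j e` is `(-1)^j A(G)^j e` plus a combination of
earlier columns of `W(G)`, so `|det W(Ḡ)| = |det W(G)|`; as the complement of `G ∨ w` is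
`Ḡ ∪ w`, this gives `|det W(G ∨ w)| = |det A(Ḡ)| · |det W(G)|`. In `(H ∪ w) ∨ w'` the vertex `w`
is pendant at `w'`, and expanding along both gives `det A((H ∪ w) ∨ w') = -det A(H)`. Hence
`|det A(Gᵢ)| = a` for even `i` and `|det A(Ḡᵢ)| = p` for odd `i`, and each step multiplies
`|det W|` alternately by `a` and by `p`. -/

section Span

open Submodule

theorem det_eq_prod_mul_det_of_col_sub_mem_span {R : Type*} [CommRing R] {n : ℕ}
    (M N : Matrix (Fin n) (Fin n) R) (ε : Fin n → R)
    (h : ∀ j, Nᵀ j - ε j • Mᵀ j ∈ span R (Mᵀ '' Set.Iio j)) :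
    N.det = (∏ j, ε j) * M.det := by
  choose l hl hlN using fun j =>
    (Finsupp.mem_span_image_iff_linearCombination R (v := fun k i => M i k)).mp (h j)
  have hl_of_le {k j : Fin n} (hjk : j ≤ k) : l j k = 0 :=
    Finsupp.notMem_support_iff.mp fun hk => (hl j hk).not_ge hjk
  let U : Matrix (Fin n) (Fin n) R := Matrix.of (fun k j => l j k) + Matrix.diagonal ε
  have hNU : N = M * U := by
    ext i j
    have hcol := congrFun (hlN j) i
    rw [Finsupp.linearCombination_apply, Finsupp.sum_fintype _ _ (by simp)] at hcol
    simp only [Finset.sum_apply, Pi.smul_apply, Pi.sub_apply, Matrix.transpose_apply,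
      smul_eq_mul] at hcol
    have hsum : ∑ k, M i k * l j k = N i j - ε j * M i j := by
      rw [← hcol]
      exact Finset.sum_congr rfl fun _ _ => mul_comm _ _
    rw [Matrix.mul_add, Matrix.add_apply, Matrix.mul_diagonal, Matrix.mul_apply]
    simp only [Matrix.of_apply, hsum]
    ring
  have hU : U.IsUpperTriangular := fun k j (hjk : j < k) => by
    simp [U, hl_of_le hjk.le, hjk.ne']
  rw [hNU, Matrix.det_mul, Matrix.det_of_isUpperTriangular hU, mul_comm]
  simp [U, hl_of_le le_rfl]

theorem pow_mulVec_sub_mem_span_pow_mulVec {R ι : Type*} [CommRing R] [Fintype ι] [DecidableEq ι]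
    (A B : Matrix ι ι R) (e : ι → R) (h : ∀ v, B *ᵥ v + A *ᵥ v ∈ span R {v, e}) (j : ℕ) :
    B ^ j *ᵥ e - (-1 : R) ^ j • (A ^ j *ᵥ e) ∈ span R ((fun k => A ^ k *ᵥ e) '' Set.Iio j) := by
  induction j with
  | zero => simp
  | succ j ih =>
    set K := span R ((fun k => A ^ k *ᵥ e) '' Set.Iio (j + 1))
    set x := B ^ j *ᵥ e
    set y := (-1 : R) ^ j • (A ^ j *ᵥ e)
    have hmono : span R ((fun k => A ^ k *ᵥ e) '' Set.Iio j) ≤ K :=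
      span_mono (Set.image_mono (Set.Iio_subset_Iio j.le_succ))
    have hy : y ∈ K := smul_mem _ _ (subset_span (Set.mem_image_of_mem _ j.lt_succ_self))
    have hx : x ∈ K := by simpa only [sub_add_cancel] using add_mem (hmono ih) hy
    have he : e ∈ K := by
      simpa using subset_span (R := R) (Set.mem_image_of_mem (fun k => A ^ k *ᵥ e)
        (show 0 ∈ Set.Iio (j + 1) from j.succ_pos))
    have hA : A *ᵥ (x - y) ∈ K := by
      have : (span R ((fun k => A ^ k *ᵥ e) '' Set.Iio j)).map A.mulVecLin ≤ K := by
        rw [map_span, ← Set.image_comp]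
        refine span_le.mpr ?_
        rintro _ ⟨k, hk, rfl⟩
        exact subset_span ⟨k + 1, Nat.succ_lt_succ hk, by simp [pow_succ', Matrix.mulVec_mulVec]⟩
      exact this (mem_map_of_mem ih)
    have hBA : B *ᵥ x + A *ᵥ x ∈ K := span_le.mpr (by simp [Set.insert_subset_iff, hx, he]) (h x)
    have : B ^ (j + 1) *ᵥ e - (-1 : R) ^ (j + 1) • (A ^ (j + 1) *ᵥ e)
        = (B *ᵥ x + A *ᵥ x) - A *ᵥ (x - y) := by
      simp only [x, y, pow_succ', ← Matrix.mulVec_mulVec, Matrix.mulVec_sub, Matrix.mulVec_smul]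
      module
    rw [this]
    exact sub_mem hBA hA

end Span

theorem det_eq_neg_det_submatrix_of_pendant {R : Type*} [CommRing R] {n : ℕ}
    (M : Matrix (Fin (n + 2)) (Fin (n + 2)) R) (hrow : M 1 = Pi.single 0 1)
    (hcol : Mᵀ 1 = Pi.single 0 1) :
    M.det = -(M.submatrix (Fin.succ ∘ Fin.succ) (Fin.succ ∘ Fin.succ)).det := by
  have hcol' (i : Fin (n + 2)) : M i 1 = (Pi.single 0 1 : Fin (n + 2) → R) i := congrFun hcol i
  rw [Matrix.det_succ_row M 1, Fin.sum_univ_succ, Matrix.det_succ_column_zero, Fin.sum_univ_succ]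
  simp [hrow, hcol', Matrix.submatrix_submatrix, Function.comp_def]

section Graphs

variable {n : ℕ} (G : SimpleGraph (Fin n))

-- `adjMat` is defined classically; `simp` must re-synthesize `Decidable` when it rewrites an
-- adjacency condition inside its `if`.
open scoped Classical

theorem adjMat_apply (u v : Fin n) : adjMat G u v = if G.Adj u v then 1 else 0 := rfl

@[simp]
theorem unionVertex_adj_succ_succ (i j : Fin n) :
    (unionVertex G).Adj i.succ j.succ ↔ G.Adj i j := by
  simp [unionVertex]

@[simp]
theorem unionVertex_not_adj_zero_left (v : Fin (n + 1)) : ¬ (unionVertex G).Adj 0 v := by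
  simp [unionVertex, eq_comm]

@[simp]
theorem unionVertex_not_adj_zero_right (v : Fin (n + 1)) : ¬ (unionVertex G).Adj v 0 :=
  fun h => unionVertex_not_adj_zero_left G v h.symm

@[simp]
theorem joinVertex_adj_succ_succ (i j : Fin n) :
    (joinVertex G).Adj i.succ j.succ ↔ G.Adj i j := by
  simp [joinVertex]

@[simp]
theorem joinVertex_adj_zero_succ (i : Fin n) : (joinVertex G).Adj 0 i.succ := by
  simp [joinVertex]

@[simp]
theorem joinVertex_adj_succ_zero (i : Fin n) : (joinVertex G).Adj i.succ 0 := by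
  simp [joinVertex]

theorem compl_unionVertex : (unionVertex G)ᶜ = joinVertex Gᶜ := by
  ext u v
  cases u using Fin.cases <;> cases v using Fin.cases <;> simp [(Fin.succ_ne_zero _).symm]

theorem compl_joinVertex : (joinVertex G)ᶜ = unionVertex Gᶜ := by
  ext u v
  cases u using Fin.cases <;> cases v using Fin.cases <;> simp [(Fin.succ_ne_zero _).symm]

theorem adjMat_compl_add_adjMat : adjMat Gᶜ + adjMat G = Matrix.of (fun _ _ => 1) - 1 := by
  ext u v
  by_cases huv : u = v
  · simp [adjMat_apply, huv]
  · by_cases h : G.Adj u v <;> simp [adjMat_apply, huv, h]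

theorem natAbs_det_walkMat_compl : (walkMat Gᶜ).det.natAbs = (walkMat G).det.natAbs := by
  have hspan (v : Fin n → ℤ) : adjMat Gᶜ *ᵥ v + adjMat G *ᵥ v ∈
      Submodule.span ℤ {v, fun _ => 1} := by
    have : adjMat Gᶜ *ᵥ v + adjMat G *ᵥ v = (∑ i, v i) • (fun _ => 1) - v := by
      rw [← Matrix.add_mulVec, adjMat_compl_add_adjMat, Matrix.sub_mulVec, Matrix.one_mulVec]
      ext i
      simp [Matrix.mulVec, dotProduct]
    rw [this]
    exact sub_mem (Submodule.smul_mem _ _ (Submodule.subset_span (by simp)))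
      (Submodule.subset_span (by simp))
  rw [det_eq_prod_mul_det_of_col_sub_mem_span (walkMat G) (walkMat Gᶜ) (fun j => (-1) ^ (j : ℕ))
    fun j => ?_]
  · simp [Int.natAbs_mul, Finset.prod_pow_eq_pow_sum, Int.natAbs_pow]
  refine Submodule.span_mono ?_ (pow_mulVec_sub_mem_span_pow_mulVec _ _ _ hspan j)
  rintro _ ⟨k, hk, rfl⟩
  exact ⟨⟨k, hk.trans j.isLt⟩, hk, rfl⟩

theorem adjMat_unionVertex_mulVec (v : Fin (n + 1) → ℤ) :
    adjMat (unionVertex G) *ᵥ v = Fin.cons 0 (adjMat G *ᵥ Fin.tail v) := by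
  ext u
  cases u using Fin.cases <;>
    simp [Matrix.mulVec, dotProduct, adjMat_apply, Fin.sum_univ_succ, Fin.tail]

theorem adjMat_unionVertex_pow_mulVec_one (k : ℕ) :
    adjMat (unionVertex G) ^ k *ᵥ (fun _ => 1) =
      Fin.cons (if k = 0 then 1 else 0) (adjMat G ^ k *ᵥ fun _ => 1) := by
  induction k with
  | zero =>
    ext u
    cases u using Fin.cases <;> simp
  | succ k ih =>
    rw [pow_succ', ← Matrix.mulVec_mulVec, ih, adjMat_unionVertex_mulVec, Fin.tail_cons,
      Matrix.mulVec_mulVec, ← pow_succ']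
    simp

theorem det_walkMat_unionVertex :
    (walkMat (unionVertex G)).det = (adjMat G).det * (walkMat G).det := by
  have hrow : walkMat (unionVertex G) 0 = Pi.single 0 1 := by
    ext j
    cases j using Fin.cases <;> simp [walkMat, adjMat_unionVertex_pow_mulVec_one]
  have hsub : (walkMat (unionVertex G)).submatrix Fin.succ Fin.succ = adjMat G * walkMat G := by
    ext i j
    rw [Matrix.submatrix_apply, walkMat, Matrix.of_apply, adjMat_unionVertex_pow_mulVec_one,
      Fin.cons_succ, Fin.val_succ, pow_succ', ← Matrix.mulVec_mulVec]
    rfl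
  rw [Matrix.det_succ_row_zero, Fin.sum_univ_succ]
  simp [hrow, hsub, Matrix.det_mul]

theorem natAbs_det_walkMat_joinVertex :
    (walkMat (joinVertex G)).det.natAbs = (adjMat Gᶜ).det.natAbs * (walkMat G).det.natAbs := by
  rw [← natAbs_det_walkMat_compl, compl_joinVertex, det_walkMat_unionVertex, Int.natAbs_mul,
    natAbs_det_walkMat_compl]

theorem det_adjMat_joinVertex_unionVertex :
    (adjMat (joinVertex (unionVertex G))).det = -(adjMat G).det := by
  rw [det_eq_neg_det_submatrix_of_pendant]
  · congr 2
    ext i j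
    simp [adjMat_apply]
  all_goals
    rw [← Fin.succ_zero_eq_one]
    ext j
    cases j using Fin.cases <;> simp [adjMat_apply, -Fin.succ_zero_eq_one', -Fin.succ_zero_eq_one]

end Graphs

section SeqGraph

variable {n0 : ℕ} (G0 : SimpleGraph (Fin n0))

theorem seqGraph_two_mul_add_one (m : ℕ) :
    seqGraph G0 (2 * m + 1) = unionVertex (seqGraph G0 (2 * m)) := by
  rw [seqGraph, if_pos (by omega)]

theorem seqGraph_two_mul_add_two (m : ℕ) :
    seqGraph G0 (2 * m + 2) = joinVertex (seqGraph G0 (2 * m + 1)) := by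
  rw [seqGraph, if_neg (by omega)]

theorem natAbs_det_adjMat_seqGraph_two_mul (m : ℕ) :
    (adjMat (seqGraph G0 (2 * m))).det.natAbs = (adjMat G0).det.natAbs := by
  induction m with
  | zero => rfl
  | succ m ih =>
    rw [← ih, show 2 * (m + 1) = 2 * m + 2 by ring, seqGraph_two_mul_add_two,
      seqGraph_two_mul_add_one, det_adjMat_joinVertex_unionVertex, Int.natAbs_neg]

theorem natAbs_det_adjMat_compl_seqGraph_two_mul_add_one (m : ℕ) :
    (adjMat (seqGraph G0 (2 * m + 1))ᶜ).det.natAbs = (adjMat (seqGraph G0 1)ᶜ).det.natAbs := by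
  induction m with
  | zero => rfl
  | succ m ih =>
    rw [← ih, seqGraph_two_mul_add_one G0 (m + 1), show 2 * (m + 1) = 2 * m + 2 by ring,
      seqGraph_two_mul_add_two, compl_unionVertex, compl_joinVertex,
      det_adjMat_joinVertex_unionVertex, Int.natAbs_neg]

theorem natAbs_det_walkMat_seqGraph_two_mul_add_one (m : ℕ) :
    (walkMat (seqGraph G0 (2 * m + 1))).det.natAbs =
      (adjMat G0).det.natAbs * (walkMat (seqGraph G0 (2 * m))).det.natAbs := by
  rw [seqGraph_two_mul_add_one, det_walkMat_unionVertex, Int.natAbs_mul,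
    natAbs_det_adjMat_seqGraph_two_mul]

theorem natAbs_det_walkMat_seqGraph_two_mul_add_two (m : ℕ) :
    (walkMat (seqGraph G0 (2 * m + 2))).det.natAbs =
      (adjMat (seqGraph G0 1)ᶜ).det.natAbs * (walkMat (seqGraph G0 (2 * m + 1))).det.natAbs := by
  rw [seqGraph_two_mul_add_two, natAbs_det_walkMat_joinVertex,
    natAbs_det_adjMat_compl_seqGraph_two_mul_add_one]

theorem natAbs_det_walkMat_seqGraph_odd (m : ℕ) :
    (walkMat (seqGraph G0 (2 * m + 1))).det.natAbs =
      (adjMat G0).det.natAbs ^ (m + 1) * (walkMat G0).det.natAbs *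
        (adjMat (seqGraph G0 1)ᶜ).det.natAbs ^ m := by
  induction m with
  | zero =>
    rw [natAbs_det_walkMat_seqGraph_two_mul_add_one, zero_add, pow_one, pow_zero, mul_one]
    rfl
  | succ m ih =>
    rw [natAbs_det_walkMat_seqGraph_two_mul_add_one, show 2 * (m + 1) = 2 * m + 2 by ring,
      natAbs_det_walkMat_seqGraph_two_mul_add_two, ih]
    ring

end SeqGraph

/-- with `a = |det A(G₀)|`, `b = |det W(G₀)|` and `p = |det A(Ḡ₁)|`,
for every `i ≥ 1` we have `|det W(Gᵢ)| = a^⌈i/2⌉ · b · p^⌊i/2⌋`. -/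
theorem natAbs_det_walkMat_seqGraph {n0 : ℕ} (G0 : SimpleGraph (Fin n0))
    (a b p : ℕ)
    (ha : a = ((adjMat G0).det).natAbs)
    (hb : b = ((walkMat G0).det).natAbs)
    (hp : p = ((adjMat (seqGraph G0 1)ᶜ).det).natAbs)
    (i : ℕ) (hi : 1 ≤ i) :
    ((walkMat (seqGraph G0 i)).det).natAbs = a ^ ((i + 1) / 2) * b * p ^ (i / 2) := by
  subst ha hb hp
  obtain ⟨m, rfl | rfl⟩ : ∃ m, i = 2 * m + 1 ∨ i = 2 * m + 2 := ⟨(i - 1) / 2, by omega⟩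
  · rw [natAbs_det_walkMat_seqGraph_odd, show (2 * m + 1 + 1) / 2 = m + 1 by omega,
      show (2 * m + 1) / 2 = m by omega]
  · rw [natAbs_det_walkMat_seqGraph_two_mul_add_two, natAbs_det_walkMat_seqGraph_odd,
      show (2 * m + 2 + 1) / 2 = m + 1 by omega, show (2 * m + 2) / 2 = m + 1 by omega]
    ring
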